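/- arXiv:2210.09387 — 6 statements merged into one kernel-verified Lean document; each statement's English description precedes it below -/
import Mathlib

section
/- Let V₁, V₂ : H_M → H_s ⊗ H_M be isometries between finite-dimensional Hilbert spaces such that the channels X ↦ tr_s(Vᵢ X Vᵢ†) each have a full-rank positive definite fixed point σᵢ and no other eigenvectors with eigenvalue of modulus 1. Then every eigenvalue ν of the linear map X ↦ tr_s(V₁ X V₂†) satisfies |ν| ≤ 1. -/
open Matrix
open scoped ComplexOrder

/-- Partial trace over the spin (first) tensor factor. -/
noncomputable def ptraceS {s m : Type*} [Fintype s]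
    (M : Matrix (s × m) (s × m) ℂ) : Matrix m m ℂ :=
  fun a b => ∑ k : s, M (k, a) (k, b)

/-!
The isometry `W = V₁ ⊕ V₂` defines a channel `Z ↦ tr_s(W Z Wᴴ)` on `(H_M ⊕ H_M)`-block
matrices which acts on the off-diagonal block as `X ↦ tr_s(V₁ X V₂ᴴ)`. Start from the positive
block matrix `Z = (X; 1)(X; 1)ᴴ`, whose off-diagonal block is `X`: the `k`-th iterate of the
channel is positive semidefinite, has the trace of `Z`, and has off-diagonal block `νᵏ X`.
Entries of a positive semidefinite matrix are bounded by its trace, so `|ν|ᵏ |X a b| ≤ tr Z`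
for all `k`.
-/

section PositiveSemidefinite

variable {n 𝕜 : Type*} [RCLike 𝕜]

lemma Matrix.PosSemidef.norm_apply_sq_le {M : Matrix n n 𝕜} (hM : M.PosSemidef) (i j : n) :
    ‖M i j‖ ^ 2 ≤ RCLike.re (M i i) * RCLike.re (M j j) := by
  have hji : M j i = star (M i j) := (hM.1.apply j i).symm
  have hdet : (0 : 𝕜) ≤ M i i * M j j - M i j * star (M i j) := by
    simpa only [det_fin_two, submatrix_apply, cons_val_zero, cons_val_one, hji]
      using (hM.submatrix ![i, j]).det_nonneg
  rwa [← hM.1.coe_re_apply_self i, ← hM.1.coe_re_apply_self j, RCLike.star_def, RCLike.mul_conj,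
    sub_nonneg, ← RCLike.ofReal_mul, ← RCLike.ofReal_pow, RCLike.ofReal_le_ofReal] at hdet

lemma Matrix.PosSemidef.norm_apply_le_re_trace [Fintype n] {M : Matrix n n 𝕜}
    (hM : M.PosSemidef) (i j : n) : ‖M i j‖ ≤ RCLike.re M.trace := by
  have hdiag_nonneg (k : n) : 0 ≤ RCLike.re (M k k) := RCLike.nonneg_iff.mp hM.diag_nonneg |>.1
  have hdiag_le (k : n) : RCLike.re (M k k) ≤ RCLike.re M.trace := by
    rw [trace, map_sum]
    exact Finset.single_le_sum (f := fun l => RCLike.re (M l l)) (fun l _ => hdiag_nonneg l)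
      (Finset.mem_univ k)
  have htrace : 0 ≤ RCLike.re M.trace := RCLike.nonneg_iff.mp hM.trace_nonneg |>.1
  refine le_of_pow_le_pow_left₀ two_ne_zero htrace ?_
  calc ‖M i j‖ ^ 2 ≤ RCLike.re (M i i) * RCLike.re (M j j) := hM.norm_apply_sq_le i j
    _ ≤ RCLike.re M.trace ^ 2 := by
      rw [sq]
      exact mul_le_mul (hdiag_le i) (hdiag_le j) (hdiag_nonneg j) htrace

end PositiveSemidefinite

section PartialTrace

variable {s m n : Type*} [Fintype s]

lemma ptraceS_eq_sum_submatrix (M : Matrix (s × m) (s × m) ℂ) :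
    ptraceS M = ∑ k : s, M.submatrix (k, ·) (k, ·) := by
  ext a b
  simp [ptraceS, Matrix.sum_apply]

lemma Matrix.PosSemidef.ptraceS [Fintype m] {M : Matrix (s × m) (s × m) ℂ}
    (hM : M.PosSemidef) : (ptraceS M).PosSemidef := by
  rw [ptraceS_eq_sum_submatrix]
  exact posSemidef_sum _ fun k _ => hM.submatrix _

lemma trace_ptraceS [Fintype m] (M : Matrix (s × m) (s × m) ℂ) :
    (ptraceS M).trace = M.trace := by
  simp [trace, ptraceS, Fintype.sum_prod_type, Finset.sum_comm (γ := s)]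

variable [Fintype n]

noncomputable def transfer (V W : Matrix (s × m) n ℂ) (X : Matrix n n ℂ) : Matrix m m ℂ :=
  ptraceS (V * X * Wᴴ)

lemma transfer_smul (V W : Matrix (s × m) n ℂ) (c : ℂ) (X : Matrix n n ℂ) :
    transfer V W (c • X) = c • transfer V W X := by
  ext a b
  simp [transfer, ptraceS, Matrix.mul_smul, Matrix.smul_mul, Finset.mul_sum]

lemma iterate_transfer_of_eq_smul {V W : Matrix (s × n) n ℂ} {ν : ℂ} {X : Matrix n n ℂ}
    (h : transfer V W X = ν • X) (k : ℕ) : (transfer V W)^[k] X = ν ^ k • X := by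
  induction k with
  | zero => simp
  | succ k ih => rw [Function.iterate_succ_apply', ih, transfer_smul, h, smul_smul, pow_succ]

lemma Matrix.PosSemidef.transfer_self [Fintype m] (V : Matrix (s × m) n ℂ) {X : Matrix n n ℂ}
    (hX : X.PosSemidef) : (transfer V V X).PosSemidef :=
  (hX.mul_mul_conjTranspose_same V).ptraceS

lemma trace_transfer_self [Fintype m] [DecidableEq n] {V : Matrix (s × m) n ℂ} (hV : Vᴴ * V = 1)
    (X : Matrix n n ℂ) : (transfer V V X).trace = X.trace := by
  rw [transfer, trace_ptraceS, trace_mul_cycle, hV, one_mul]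

end PartialTrace

section BlockSum

variable {s m n : Type*}

def blockSum (V₁ V₂ : Matrix (s × m) n ℂ) : Matrix (s × (m ⊕ m)) (n ⊕ n) ℂ :=
  (fromBlocks V₁ 0 0 V₂).submatrix (Equiv.prodSumDistrib s m m) id

variable [Fintype s]

lemma conjTranspose_blockSum_mul_self [Fintype m] [DecidableEq n] {V₁ V₂ : Matrix (s × m) n ℂ}
    (hV₁ : V₁ᴴ * V₁ = 1) (hV₂ : V₂ᴴ * V₂ = 1) : (blockSum V₁ V₂)ᴴ * blockSum V₁ V₂ = 1 := by
  rw [blockSum, conjTranspose_submatrix, submatrix_mul_equiv, fromBlocks_conjTranspose]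
  simp [fromBlocks_multiply, hV₁, hV₂]

lemma toBlocks₁₂_transfer_blockSum [Fintype n] (V₁ V₂ : Matrix (s × m) n ℂ)
    (Z : Matrix (n ⊕ n) (n ⊕ n) ℂ) :
    (transfer (blockSum V₁ V₂) (blockSum V₁ V₂) Z).toBlocks₁₂ = transfer V₁ V₂ Z.toBlocks₁₂ := by
  ext a b
  simp [transfer, ptraceS, blockSum, toBlocks₁₂, mul_apply, Fintype.sum_sum_type, fromBlocks]

end BlockSum

lemma le_one_of_forall_pow_mul_le {r c C : ℝ} (hc : 0 < c) (h : ∀ k : ℕ, r ^ k * c ≤ C) :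
    r ≤ 1 := by
  by_contra! hr
  obtain ⟨k, hk⟩ := pow_unbounded_of_one_lt (C / c) hr
  exact (h k).not_gt (by rwa [div_lt_iff₀ hc] at hk)

theorem cross_transfer_eigenvalue_abs_le_one_general {s m : Type*}
    [Fintype s] [Fintype m] [DecidableEq m]
    (V₁ V₂ : Matrix (s × m) m ℂ)
    (hV₁ : V₁ᴴ * V₁ = 1) (hV₂ : V₂ᴴ * V₂ = 1)
    (ν : ℂ) (X : Matrix m m ℂ) (hX : X ≠ 0)
    (heig : ptraceS (V₁ * X * V₂ᴴ) = ν • X) :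
    ‖ν‖ ≤ 1 := by
  obtain ⟨a, b, hab⟩ : ∃ a b, X a b ≠ 0 := by
    by_contra! h
    exact hX (Matrix.ext h)
  set Φ := transfer (blockSum V₁ V₂) (blockSum V₁ V₂)
  set Z : Matrix (m ⊕ m) (m ⊕ m) ℂ := fromRows X 1 * (fromRows X 1)ᴴ
  have hZ : Z.toBlocks₁₂ = X := by
    simp [Z, conjTranspose_fromRows_eq_fromCols_conjTranspose]
  refine le_one_of_forall_pow_mul_le (C := Z.trace.re) (norm_pos_iff.mpr hab) fun k => ?_
  have hpos : (Φ^[k] Z).PosSemidef :=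
    Function.Iterate.rec _ (posSemidef_self_mul_conjTranspose _) (fun _ h => h.transfer_self _) k
  have htrace : (Φ^[k] Z).trace = Z.trace :=
    Function.Iterate.rec (fun Y => Y.trace = Z.trace) rfl
      (fun Y h => (trace_transfer_self (conjTranspose_blockSum_mul_self hV₁ hV₂) Y).trans h) k
  have hblock : (Φ^[k] Z).toBlocks₁₂ = ν ^ k • X := by
    rw [(Function.Semiconj.iterate_right (toBlocks₁₂_transfer_blockSum V₁ V₂) k) Z, hZ]
    exact iterate_transfer_of_eq_smul heig k
  calc ‖ν‖ ^ k * ‖X a b‖ = ‖(ν ^ k • X) a b‖ := by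
        rw [Matrix.smul_apply, smul_eq_mul, norm_mul, norm_pow]
    _ = ‖Φ^[k] Z (.inl a) (.inr b)‖ := by rw [← hblock]; rfl
    _ ≤ (Φ^[k] Z).trace.re := hpos.norm_apply_le_re_trace _ _
    _ = Z.trace.re := by rw [htrace]

/-- If `V₁, V₂ : H_M → H_s ⊗ H_M` are isometries whose induced channels
`X ↦ tr_s(Vᵢ X Vᵢᴴ)` have full-rank positive definite fixed points `σᵢ` and no other
eigenvectors with eigenvalue of modulus 1, then every eigenvalue `ν` of
`X ↦ tr_s(V₁ X V₂ᴴ)` satisfies `|ν| ≤ 1`. -/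
theorem cross_transfer_eigenvalue_abs_le_one {s m : Type*}
    [Fintype s] [Fintype m] [DecidableEq m]
    (V₁ V₂ : Matrix (s × m) m ℂ) (σ₁ σ₂ : Matrix m m ℂ)
    (hV₁ : V₁ᴴ * V₁ = 1) (hV₂ : V₂ᴴ * V₂ = 1)
    (hσ₁ : σ₁.PosDef) (hσ₂ : σ₂.PosDef)
    (hfix₁ : ptraceS (V₁ * σ₁ * V₁ᴴ) = σ₁)
    (hfix₂ : ptraceS (V₂ * σ₂ * V₂ᴴ) = σ₂)
    (hper₁ : ∀ (X : Matrix m m ℂ) (c : ℂ), X ≠ 0 → ‖c‖ = 1 →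
      ptraceS (V₁ * X * V₁ᴴ) = c • X → c = 1 ∧ ∃ z : ℂ, X = z • σ₁)
    (hper₂ : ∀ (X : Matrix m m ℂ) (c : ℂ), X ≠ 0 → ‖c‖ = 1 →
      ptraceS (V₂ * X * V₂ᴴ) = c • X → c = 1 ∧ ∃ z : ℂ, X = z • σ₂)
    (ν : ℂ) (X : Matrix m m ℂ) (hX : X ≠ 0)
    (heig : ptraceS (V₁ * X * V₂ᴴ) = ν • X) :
    ‖ν‖ ≤ 1 :=
  cross_transfer_eigenvalue_abs_le_one_general V₁ V₂ hV₁ hV₂ ν X hX heig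
end

section
/- With Ṽ = Σ_{i,j} √σᵢ |ξ_{ij}⟩ ⊗ |i⟩⟨j| as above and the unitary isomorphism I : span{|ξ_{ij}⟩} → H_M ⊗ H_M defined by I|ξ_{ij}⟩ = |j⟩ ⊗ |i⟩, one has, for any isometries V_A : H_M → H_A ⊗ H_M and V_C : H_M → H_C ⊗ H_M, the factorization I · tr_M(V_C Ṽ V_A σ V_A† Ṽ† V_C†) · I† = (V_A σ V_A†) ⊗ tr_M(V_C σ^{1/2} |+⟩⟨+| σ^{1/2} V_C†), where |+⟩ = Σᵢ |i⟩ ⊗ |i⟩. -/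
open Matrix

private lemma sum_swap3 {ι₁ ι₂ ι₃ M : Type*} [Fintype ι₁] [Fintype ι₂] [Fintype ι₃]
    [AddCommMonoid M] (f : ι₁ → ι₂ → ι₃ → M) :
    (∑ x : ι₁, ∑ y : ι₂, ∑ n : ι₃, f x y n) = ∑ n : ι₃, ∑ x : ι₁, ∑ y : ι₂, f x y n := by
  calc (∑ x : ι₁, ∑ y : ι₂, ∑ n : ι₃, f x y n)
      = ∑ x : ι₁, ∑ n : ι₃, ∑ y : ι₂, f x y n :=
        Finset.sum_congr rfl fun x _ => Finset.sum_comm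
    _ = ∑ n : ι₃, ∑ x : ι₁, ∑ y : ι₂, f x y n := Finset.sum_comm

private lemma sum_swap5 {ι₁ ι₂ ι₃ ι₄ ι₅ M : Type*} [Fintype ι₁] [Fintype ι₂] [Fintype ι₃]
    [Fintype ι₄] [Fintype ι₅] [AddCommMonoid M] (f : ι₁ → ι₂ → ι₃ → ι₄ → ι₅ → M) :
    (∑ x : ι₁, ∑ y : ι₂, ∑ n : ι₃, ∑ m : ι₄, ∑ m' : ι₅, f x y n m m') =
      ∑ n : ι₃, ∑ m : ι₄, ∑ m' : ι₅, ∑ x : ι₁, ∑ y : ι₂, f x y n m m' := by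
  rw [sum_swap3 (f := fun x y n => ∑ m : ι₄, ∑ m' : ι₅, f x y n m m')]
  refine Finset.sum_congr rfl fun n _ => ?_
  rw [sum_swap3 (f := fun x y m => ∑ m' : ι₅, f x y n m m')]
  refine Finset.sum_congr rfl fun m _ => ?_
  exact sum_swap3 _

/-- With `Ṽ = Σ_{i,j} √σᵢ |ξ_{ij}⟩ ⊗ |i⟩⟨j|` and the unitary isomorphism
`I : span{ξ_{ij}} → H_M ⊗ H_M`, `I|ξ_{ij}⟩ = |j⟩ ⊗ |i⟩`, for any isometries
`V_A : H_M → H_A ⊗ H_M` and `V_C : H_M → H_C ⊗ H_M` one has, entrywise,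
`I tr_M(V_C Ṽ V_A σ V_Aᴴ Ṽᴴ V_Cᴴ) Iᴴ = (V_A σ V_Aᴴ) ⊗ tr_M(V_C σ^{1/2}|+⟩⟨+|σ^{1/2} V_Cᴴ)`,
where `|+⟩ = Σᵢ |i⟩ ⊗ |i⟩`. -/
theorem markov_factorization_of_approximate_state
    {a c b : Type*} [Fintype a] [Fintype c] [Fintype b] (d : ℕ)
    (σv : Fin d → ℝ) (hpos : ∀ i, 0 < σv i) (hsum : ∑ i, σv i = 1)
    (σ : Matrix (Fin d) (Fin d) ℂ) (hσ : σ = Matrix.diagonal (fun i => (σv i : ℂ)))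
    (ξ : Fin d → Fin d → b → ℂ)
    (horth : ∀ i j i' j',
      (∑ x : b, (starRingEnd ℂ) (ξ i j x) * ξ i' j' x) =
        if i = i' ∧ j = j' then 1 else 0)
    (VA : Matrix (a × Fin d) (Fin d) ℂ) (hVA : VAᴴ * VA = 1)
    (VC : Matrix (c × Fin d) (Fin d) ℂ) (hVC : VCᴴ * VC = 1)
    (Vt : Matrix (b × Fin d) (Fin d) ℂ)
    (hVt : ∀ (x : b) (i j : Fin d), Vt (x, i) j = (Real.sqrt (σv i) : ℂ) * ξ i j x)
    -- the total isometry `T = V_C Ṽ V_A : H_M → H_A ⊗ H_B ⊗ H_C ⊗ H_M`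
    (T : Matrix ((a × b × c) × Fin d) (Fin d) ℂ)
    (hT : ∀ (α : a) (x : b) (γ : c) (n j : Fin d),
      T ((α, x, γ), n) j =
        ∑ k : Fin d, ∑ l : Fin d, VA (α, k) j * Vt (x, l) k * VC (γ, n) l)
    -- the approximating state `ρ̃ = tr_M(T σ Tᴴ)`
    (ρt : Matrix (a × b × c) (a × b × c) ℂ)
    (hρt : ∀ p q : a × b × c,
      ρt p q = ∑ n : Fin d, ∑ j : Fin d, ∑ j' : Fin d,
        T (p, n) j * σ j j' * (starRingEnd ℂ) (T (q, n) j')) :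
    ∀ (α α' : a) (γ γ' : c) (i j i' j' : Fin d),
      (∑ x : b, ∑ x' : b,
          (starRingEnd ℂ) (ξ i j x) * ρt (α, x, γ) (α', x', γ') * ξ i' j' x') =
        (VA * σ * VAᴴ) (α, j) (α', j') *
          (((Real.sqrt (σv i) : ℂ) * (Real.sqrt (σv i') : ℂ)) *
            ∑ n : Fin d, VC (γ, n) i * (starRingEnd ℂ) (VC (γ', n) i')) := by
  intro α α' γ γ' i j i' j'
  -- the key collapse of the `x`-sum using orthonormality of the `ξ`'s
  have key : ∀ (β : a) (δ : c) (I J : Fin d) (n m : Fin d),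
      (∑ x : b, (starRingEnd ℂ) (ξ I J x) * T ((β, x, δ), n) m)
        = (Real.sqrt (σv I) : ℂ) * (VA (β, J) m * VC (δ, n) I) := by
    intro β δ I J n m
    have h1 : ∀ x : b, (starRingEnd ℂ) (ξ I J x) * T ((β, x, δ), n) m
        = ∑ k : Fin d, ∑ l : Fin d,
            (VA (β, k) m * (Real.sqrt (σv l) : ℂ) * VC (δ, n) l) *
              ((starRingEnd ℂ) (ξ I J x) * ξ l k x) := by
      intro x
      rw [hT, Finset.mul_sum]
      refine Finset.sum_congr rfl fun k _ => ?_
      rw [Finset.mul_sum]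
      refine Finset.sum_congr rfl fun l _ => ?_
      rw [hVt]; ring
    simp only [h1]
    rw [Finset.sum_comm]
    have h2 : ∀ k : Fin d, (∑ x : b, ∑ l : Fin d,
        (VA (β, k) m * (Real.sqrt (σv l) : ℂ) * VC (δ, n) l) *
          ((starRingEnd ℂ) (ξ I J x) * ξ l k x))
        = ∑ l : Fin d, (VA (β, k) m * (Real.sqrt (σv l) : ℂ) * VC (δ, n) l) *
            ∑ x : b, (starRingEnd ℂ) (ξ I J x) * ξ l k x := by
      intro k
      rw [Finset.sum_comm]
      exact Finset.sum_congr rfl fun l _ => (Finset.mul_sum _ _ _).symm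
    simp only [h2, horth]
    simp [Finset.sum_ite_eq, ite_and, mul_ite]
    ring
  -- the conjugate version
  have key' : ∀ (n m : Fin d),
      (∑ x' : b, (starRingEnd ℂ) (T ((α', x', γ'), n) m) * ξ i' j' x')
        = (Real.sqrt (σv i') : ℂ) *
            ((starRingEnd ℂ) (VA (α', j') m) * (starRingEnd ℂ) (VC (γ', n) i')) := by
    intro n m
    have h := congrArg (starRingEnd ℂ) (key α' γ' i' j' n m)
    rw [map_sum] at h
    simp only [_root_.map_mul, RingHomCompTriple.comp_apply, Complex.conj_conj,
      Complex.conj_ofReal] at h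
    calc (∑ x' : b, (starRingEnd ℂ) (T ((α', x', γ'), n) m) * ξ i' j' x')
        = ∑ x' : b, ξ i' j' x' * (starRingEnd ℂ) (T ((α', x', γ'), n) m) :=
          Finset.sum_congr rfl fun x' _ => mul_comm _ _
      _ = _ := h
  -- expand `ρt` and rearrange sums
  have main1 : ∀ x x' : b,
      (starRingEnd ℂ) (ξ i j x) * ρt (α, x, γ) (α', x', γ') * ξ i' j' x'
        = ∑ n : Fin d, ∑ m : Fin d, ∑ m' : Fin d, σ m m' *
            (((starRingEnd ℂ) (ξ i j x) * T ((α, x, γ), n) m) *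
              ((starRingEnd ℂ) (T ((α', x', γ'), n) m') * ξ i' j' x')) := by
    intro x x'
    rw [hρt]
    simp only [Finset.sum_mul, Finset.mul_sum]
    refine Finset.sum_congr rfl fun n _ => Finset.sum_congr rfl fun m _ =>
      Finset.sum_congr rfl fun m' _ => ?_
    ring
  simp only [main1]
  rw [sum_swap5]
  have main2 : ∀ (n m m' : Fin d),
      (∑ x : b, ∑ x' : b, σ m m' *
          (((starRingEnd ℂ) (ξ i j x) * T ((α, x, γ), n) m) *
            ((starRingEnd ℂ) (T ((α', x', γ'), n) m') * ξ i' j' x')))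
        = σ m m' * ((∑ x : b, (starRingEnd ℂ) (ξ i j x) * T ((α, x, γ), n) m) *
            (∑ x' : b, (starRingEnd ℂ) (T ((α', x', γ'), n) m') * ξ i' j' x')) := by
    intro n m m'
    rw [Finset.sum_mul_sum, Finset.mul_sum]
    exact Finset.sum_congr rfl fun x _ => by rw [Finset.mul_sum]
  simp only [main2, key, key']
  -- now both sides are explicit sums; finish by factoring
  calc (∑ n : Fin d, ∑ m : Fin d, ∑ m' : Fin d, σ m m' *
          (((Real.sqrt (σv i) : ℂ) * (VA (α, j) m * VC (γ, n) i)) *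
            ((Real.sqrt (σv i') : ℂ) *
              ((starRingEnd ℂ) (VA (α', j') m') * (starRingEnd ℂ) (VC (γ', n) i')))))
      = ∑ n : Fin d, (((Real.sqrt (σv i) : ℂ) * (Real.sqrt (σv i') : ℂ)) *
          (VC (γ, n) i * (starRingEnd ℂ) (VC (γ', n) i'))) *
          (∑ m : Fin d, ∑ m' : Fin d,
            VA (α, j) m * σ m m' * (starRingEnd ℂ) (VA (α', j') m')) := by
        refine Finset.sum_congr rfl fun n _ => ?_
        rw [Finset.mul_sum]
        refine Finset.sum_congr rfl fun m _ => ?_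
        rw [Finset.mul_sum]
        refine Finset.sum_congr rfl fun m' _ => ?_
        ring
    _ = _ := by
        rw [← Finset.sum_mul, ← Finset.mul_sum, mul_comm]
        congr 1
        simp only [Matrix.mul_apply, Matrix.conjTranspose_apply, Finset.sum_mul]
        rw [Finset.sum_comm]
        refine Finset.sum_congr rfl fun m _ => Finset.sum_congr rfl fun m' _ => ?_
        simp [RingHom.map_mul]
end

section
/- Let R_{B→BC}(X) := I† Σ_k tr_{b_k^r}(P_k (I X I†) P_k) ⊗ ρ_{b_k^r C} I, where I : supp(ρ_B) → ⊕_k H_{b_k^l} ⊗ H_{b_k^r} is a unitary isomorphism under which I ρ_{ABC} I† = ⊕_k λ_k ρ_{A b_k^l} ⊗ ρ_{b_k^r C}, and P_k projects onto H_{b_k^l} ⊗ H_{b_k^r}. Then R_{B→BC}(ρ_{AB}) = ρ_{ABC}. -/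
open Matrix
open scoped ComplexOrder

/-- Partial trace over the last (C) tensor factor of a tripartite system `A × B × C`. -/
noncomputable def ptraceC {A B C : Type*} [Fintype C]
    (M : Matrix (A × B × C) (A × B × C) ℂ) : Matrix (A × B) (A × B) ℂ :=
  fun p q => ∑ γ : C, M (p.1, p.2, γ) (q.1, q.2, γ)

/-- The block (quantum Markov chain) form `⊕_k λ_k τ_k ⊗ ω_k` on
`H_A ⊗ (⊕_k H_{b_k^l} ⊗ H_{b_k^r}) ⊗ H_C`, entrywise. -/
noncomputable def blockForm {A C ι : Type*} [DecidableEq ι]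
    {bl br : ι → Type*}
    (lam : ι → ℝ)
    (τ : (k : ι) → Matrix (A × bl k) (A × bl k) ℂ)
    (ω : (k : ι) → Matrix (br k × C) (br k × C) ℂ)
    (α : A) (e : (k : ι) × (bl k × br k)) (γ : C)
    (α' : A) (e' : (k : ι) × (bl k × br k)) (γ' : C) : ℂ :=
  if h : e.1 = e'.1 then
    (lam e.1 : ℂ) * τ e.1 (α, e.2.1) (α', cast (congrArg bl h).symm e'.2.1) *
      ω e.1 (e.2.2, γ) (cast (congrArg br h).symm e'.2.2, γ')
  else 0

/-- The recovery channel `R_{B→BC}(X) = Iᴴ Σ_k tr_{b_k^r}(P_k (I X Iᴴ) P_k) ⊗ ρ_{b_k^r C} I`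
(with the identity acting on the `A` factor), entrywise. -/
noncomputable def recoveryOut {A B C ι : Type*} [Fintype B] [DecidableEq ι] [Fintype ι]
    {bl br : ι → Type*} [∀ k, Fintype (bl k)] [∀ k, Fintype (br k)]
    (I : Matrix ((k : ι) × (bl k × br k)) B ℂ)
    (ω : (k : ι) → Matrix (br k × C) (br k × C) ℂ)
    (X : Matrix (A × B) (A × B) ℂ) :
    Matrix (A × B × C) (A × B × C) ℂ :=
  fun p q =>
    ∑ e : (k : ι) × (bl k × br k), ∑ e' : (k : ι) × (bl k × br k),
      (starRingEnd ℂ) (I e p.2.1) *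
        (if h : e.1 = e'.1 then
          (∑ r'' : br e.1, ∑ bb : B, ∑ bb' : B,
              I ⟨e.1, (e.2.1, r'')⟩ bb * X (p.1, bb) (q.1, bb') *
                (starRingEnd ℂ) (I ⟨e.1, (cast (congrArg bl h).symm e'.2.1, r'')⟩ bb')) *
            ω e.1 (e.2.2, p.2.2) (cast (congrArg br h).symm e'.2.2, q.2.2)
        else 0) * I e' q.2.1

/-- If `ρ_{ABC}` is in quantum-Markov-chain form, i.e. there is a unitary isomorphism
`I : supp(ρ_B) → ⊕_k H_{b_k^l} ⊗ H_{b_k^r}` (acting only on B) with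
`I ρ_{ABC} Iᴴ = ⊕_k λ_k ρ_{A b_k^l} ⊗ ρ_{b_k^r C}`, `λ_k > 0`, `Σ λ_k = 1`, then the
channel `R_{B→BC}(X) = Iᴴ Σ_k tr_{b_k^r}(P_k (I X Iᴴ) P_k) ⊗ ρ_{b_k^r C} I` recovers
`ρ_{ABC}` from `ρ_{AB} = tr_C ρ_{ABC}`. -/
theorem recovery_channel_recovers_markov_chain
    {A B C ι : Type*} [Fintype A] [Fintype B] [Fintype C] [Fintype ι] [DecidableEq ι]
    {bl br : ι → Type*} [∀ k, Fintype (bl k)] [∀ k, Fintype (br k)]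
    [∀ k, DecidableEq (bl k)] [∀ k, DecidableEq (br k)]
    (I : Matrix ((k : ι) × (bl k × br k)) B ℂ)
    (hI : I * Iᴴ = 1)
    (lam : ι → ℝ) (hlam : ∀ k, 0 < lam k) (hsum : ∑ k, lam k = 1)
    (τ : (k : ι) → Matrix (A × bl k) (A × bl k) ℂ)
    (ω : (k : ι) → Matrix (br k × C) (br k × C) ℂ)
    (hτ : ∀ k, (τ k).PosSemidef) (hτtr : ∀ k, (τ k).trace = 1)
    (hω : ∀ k, (ω k).PosSemidef) (hωtr : ∀ k, (ω k).trace = 1)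
    (ρ : Matrix (A × B × C) (A × B × C) ℂ)
    (hρ : ∀ (α α' : A) (bb bb' : B) (γ γ' : C),
      ρ (α, bb, γ) (α', bb', γ') =
        ∑ e : (k : ι) × (bl k × br k), ∑ e' : (k : ι) × (bl k × br k),
          (starRingEnd ℂ) (I e bb) * blockForm lam τ ω α e γ α' e' γ' * I e' bb') :
    recoveryOut I ω (ptraceC ρ) = ρ := by
  classical
  funext p q
  obtain ⟨α, bb₀, γ⟩ := p
  obtain ⟨α', bb₀', γ'⟩ := q
  rw [hρ]
  show ∑ e : (k : ι) × (bl k × br k), ∑ e' : (k : ι) × (bl k × br k), _ = _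
  set N : Matrix ((k : ι) × (bl k × br k)) ((k : ι) × (bl k × br k)) ℂ :=
    fun f f' => ∑ γ'' : C, blockForm lam τ ω α f γ'' α' f' γ'' with hN
  set M : Matrix B B ℂ := Iᴴ * N * I with hM
  have hpt : ∀ b b' : B, ptraceC ρ (α, b) (α', b') = M b b' := by
    intro b b'
    calc ptraceC ρ (α, b) (α', b')
        = ∑ γ'' : C, ∑ f : (k : ι) × (bl k × br k), ∑ f' : (k : ι) × (bl k × br k),
            (starRingEnd ℂ) (I f b) * blockForm lam τ ω α f γ'' α' f' γ'' * I f' b' := by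
          simp only [ptraceC, hρ]
      _ = ∑ f : (k : ι) × (bl k × br k), ∑ f' : (k : ι) × (bl k × br k), ∑ γ'' : C,
            (starRingEnd ℂ) (I f b) * blockForm lam τ ω α f γ'' α' f' γ'' * I f' b' := by
          rw [Finset.sum_comm]
          exact Finset.sum_congr rfl fun f _ => Finset.sum_comm
      _ = ∑ f : (k : ι) × (bl k × br k), ∑ f' : (k : ι) × (bl k × br k),
            (starRingEnd ℂ) (I f b) * N f f' * I f' b' := by
          refine Finset.sum_congr rfl fun f _ => Finset.sum_congr rfl fun f' _ => ?_
          rw [hN]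
          simp only [Finset.sum_mul, Finset.mul_sum]
      _ = M b b' := by
          rw [hM, Matrix.mul_apply]
          rw [Finset.sum_comm]
          refine Finset.sum_congr rfl fun f _ => ?_
          rw [Matrix.mul_apply, Finset.sum_mul]
          exact Finset.sum_congr rfl fun f' _ => by
            simp only [Matrix.conjTranspose_apply, starRingEnd_apply]; try ring
  have h2 : I * M * Iᴴ = N := by
    rw [hM, ← Matrix.mul_assoc, ← Matrix.mul_assoc, hI, Matrix.one_mul, Matrix.mul_assoc, hI,
      Matrix.mul_one]
  have hsand : ∀ a a' : (k : ι) × (bl k × br k),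
      (∑ b : B, ∑ b' : B,
        I a b * ptraceC ρ (α, b) (α', b') * (starRingEnd ℂ) (I a' b')) = N a a' := by
    intro a a'
    calc (∑ b : B, ∑ b' : B,
            I a b * ptraceC ρ (α, b) (α', b') * (starRingEnd ℂ) (I a' b'))
        = (I * M * Iᴴ) a a' := by
          rw [Matrix.mul_apply, Finset.sum_comm]
          refine Finset.sum_congr rfl fun b' _ => ?_
          rw [Matrix.mul_apply, Finset.sum_mul]
          refine Finset.sum_congr rfl fun b _ => ?_
          rw [hpt, Matrix.conjTranspose_apply, starRingEnd_apply]
      _ = N a a' := by rw [h2]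
  refine Finset.sum_congr rfl fun e _ => Finset.sum_congr rfl fun e' _ => ?_
  obtain ⟨k, l, r⟩ := e
  obtain ⟨k', l', r'⟩ := e'
  congr 1
  congr 1
  show (if h : k = k' then _ else 0) = blockForm lam τ ω α ⟨k, (l, r)⟩ γ α' ⟨k', (l', r')⟩ γ'
  unfold blockForm
  by_cases h : k = k'
  · subst h
    rw [dif_pos rfl, dif_pos rfl]
    simp only [cast_eq]
    have hkey : (∑ r'' : br k, ∑ b : B, ∑ b' : B,
        I ⟨k, (l, r'')⟩ b * ptraceC ρ (α, b) (α', b') * (starRingEnd ℂ) (I ⟨k, (l', r'')⟩ b'))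
        = (lam k : ℂ) * τ k (α, l) (α', l') := by
      have hthis : ∀ r'' : br k, (∑ b : B, ∑ b' : B,
          I ⟨k, (l, r'')⟩ b * ptraceC ρ (α, b) (α', b') * (starRingEnd ℂ) (I ⟨k, (l', r'')⟩ b'))
          = ∑ γ'' : C, (lam k : ℂ) * τ k (α, l) (α', l') * ω k (r'', γ'') (r'', γ'') := by
        intro r''
        rw [hsand ⟨k, (l, r'')⟩ ⟨k, (l', r'')⟩, hN]
        refine Finset.sum_congr rfl fun γ'' _ => ?_
        unfold blockForm
        rw [dif_pos rfl]
        simp only [cast_eq]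
      rw [Finset.sum_congr rfl fun r'' _ => hthis r'']
      have htr : (∑ r'' : br k, ∑ γ'' : C, ω k (r'', γ'') (r'', γ'')) = 1 := by
        rw [← hωtr k, Matrix.trace]
        simp [Matrix.diag, Fintype.sum_prod_type]
      simp only [mul_assoc, ← Finset.mul_sum]
      rw [htr, mul_one]
    rw [hkey]
  · rw [dif_neg h, dif_neg h]
end

section
/- Let Φ : M_d(ℂ) → M_s(ℂ) ⊗ M_d(ℂ) be a completely positive trace-preserving map and σ a full-rank density matrix. Suppose σ = ⊕_{α} λ_α σ_α is block diagonal with respect to orthogonal projections Π_α summing to the identity, and Φ(Π_α X Π_α) ∈ M_s(ℂ) ⊗ Π_α M_d(ℂ) Π_α for all α and X. Then the generated state ρ_R = tr_M(Φ^{n}(σ)) decomposes as ρ_R = Σ_α λ_α tr_M(Φ^{n}(σ_α)) for every n ≥ 1. -/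
open Matrix
open scoped ComplexOrder Kronecker

/-- The tensor extension `id_T ⊗ Φ` of a generating map `Φ : M_D → M_S ⊗ M_D`,
acting on the memory (second) factor. -/
def idTensorGen {T S D : Type*} (Φ : Matrix D D ℂ → Matrix (S × D) (S × D) ℂ)
    (M : Matrix (T × D) (T × D) ℂ) : Matrix (T × (S × D)) (T × (S × D)) ℂ :=
  fun p q => Φ (fun x y => M (p.1, x) (q.1, y)) p.2 q.2

/-- Relabelling `(Fin n → S) × (S × D) ≃ (Fin (n+1) → S) × D`. -/
def spinEquiv (S D : Type*) (n : ℕ) : ((Fin n → S) × (S × D)) ≃ ((Fin (n + 1) → S) × D) :=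
  ((Equiv.prodAssoc (Fin n → S) S D).symm.trans
    ((Equiv.prodComm (Fin n → S) S).prodCongr (Equiv.refl D))).trans
    ((Fin.consEquiv (fun _ : Fin (n + 1) => S)).prodCongr (Equiv.refl D))

/-- The `n`-fold composition `Φⁿ = (id_{s^{n−1}} ⊗ Φ) ∘ Φ^{n−1}` generating `n` spins. -/
def phiIter {S D : Type*} (Φ : Matrix D D ℂ → Matrix (S × D) (S × D) ℂ) :
    (n : ℕ) → Matrix D D ℂ → Matrix ((Fin n → S) × D) ((Fin n → S) × D) ℂ
  | 0, X => fun p q => X p.2 q.2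
  | n + 1, X =>
      Matrix.reindex (spinEquiv S D n) (spinEquiv S D n) (idTensorGen Φ (phiIter Φ n X))

/-- Partial trace over the memory (second) factor. -/
noncomputable def ptraceM {T D : Type*} [Fintype D]
    (M : Matrix (T × D) (T × D) ℂ) : Matrix T T ℂ :=
  fun t t' => ∑ x : D, M (t, x) (t', x)

/-!
Both `Φⁿ` and the partial trace over the memory are linear, so the generated state is linear in
the initial memory state. Splitting `σ = Σ_α Pj_α σ Pj_α` therefore splits the generated state
into the states generated by the blocks, and each block equals `λ_α σ_α`: for `λ_α ≠ 0` this is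
the definition of `σ_α`, while a positive semidefinite block of trace zero vanishes, so the junk
value `0⁻¹ = 0` in `σ_α` is harmless.
-/

theorem Matrix.PosSemidef.trace_smul_inv_trace_smul {n : Type*} [Fintype n] {A : Matrix n n ℂ}
    (hA : A.PosSemidef) : A.trace • A.trace⁻¹ • A = A := by
  by_cases h : A.trace = 0
  · rw [hA.trace_eq_zero_iff.mp h, smul_zero, smul_zero]
  · exact smul_inv_smul₀ h A

section Linearity

variable {T S D : Type*} (Φ : Matrix D D ℂ →ₗ[ℂ] Matrix (S × D) (S × D) ℂ)

def idTensorGenLinearMap :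
    Matrix (T × D) (T × D) ℂ →ₗ[ℂ] Matrix (T × (S × D)) (T × (S × D)) ℂ where
  toFun := idTensorGen Φ
  map_add' M N := by
    ext p q
    exact congr_fun₂ (Φ.map_add (M.submatrix _ _) (N.submatrix _ _)) p.2 q.2
  map_smul' c M := by
    ext p q
    exact congr_fun₂ (Φ.map_smul c (M.submatrix _ _)) p.2 q.2

def phiIterLinearMap :
    (n : ℕ) → Matrix D D ℂ →ₗ[ℂ] Matrix ((Fin n → S) × D) ((Fin n → S) × D) ℂ
  | 0 =>
    { toFun := fun X p q => X p.2 q.2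
      map_add' _ _ := rfl
      map_smul' _ _ := rfl }
  | n + 1 => (reindexLinearEquiv ℂ ℂ (spinEquiv S D n) (spinEquiv S D n)).toLinearMap ∘ₗ
      idTensorGenLinearMap Φ ∘ₗ phiIterLinearMap n

theorem coe_phiIterLinearMap (n : ℕ) : ⇑(phiIterLinearMap Φ n) = phiIter (⇑Φ) n := by
  induction n with
  | zero => rfl
  | succ n ih => funext X; simp only [phiIterLinearMap, phiIter, ← ih]; rfl

noncomputable def ptraceMLinearMap [Fintype D] : Matrix (T × D) (T × D) ℂ →ₗ[ℂ] Matrix T T ℂ where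
  toFun := ptraceM
  map_add' M N := by
    ext t t'
    simp only [ptraceM, Matrix.add_apply, Finset.sum_add_distrib]
  map_smul' c M := by
    ext t t'
    simp only [ptraceM, Matrix.smul_apply, smul_eq_mul, Finset.mul_sum, RingHom.id_apply]

end Linearity

theorem fcs_decomposes_into_ergodic_components_general
    {S D ι : Type*} [Fintype D] [Fintype ι]
    (Φ : Matrix D D ℂ →ₗ[ℂ] Matrix (S × D) (S × D) ℂ)
    (Pj : ι → Matrix D D ℂ)
    (hherm : ∀ α, (Pj α)ᴴ = Pj α)
    (σ : Matrix D D ℂ) (hσ : σ.PosDef)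
    (hblock : σ = ∑ α, Pj α * σ * Pj α) :
    ∀ n : ℕ, 1 ≤ n →
      ptraceM (phiIter (⇑Φ) n σ) =
        ∑ α, ((Pj α * σ * Pj α).trace) •
          ptraceM (phiIter (⇑Φ) n (((Pj α * σ * Pj α).trace)⁻¹ • (Pj α * σ * Pj α))) := by
  intro n _
  set L := ptraceMLinearMap ∘ₗ phiIterLinearMap Φ n
  have hL : ∀ X, ptraceM (phiIter (⇑Φ) n X) = L X := by
    intro X; simp [L, ptraceMLinearMap, coe_phiIterLinearMap]
  have hblock_psd : ∀ α, (Pj α * σ * Pj α).PosSemidef := fun α => by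
    simpa only [hherm α] using hσ.posSemidef.conjTranspose_mul_mul_same (Pj α)
  simp only [hL, ← map_smul, (hblock_psd _).trace_smul_inv_trace_smul]
  rw [← map_sum, ← hblock]

/-- Let `Φ : M_d → M_s ⊗ M_d` be a CPTP map and `σ` a full-rank density matrix which is
block diagonal, `σ = Σ_α Pj_α σ Pj_α`, for orthogonal projections `Pj_α` summing to `1`,
and suppose `Φ` preserves the block structure:
`Φ(Pj_α X Pj_α) ∈ M_s ⊗ Pj_α M_d Pj_α`.  Then the generated state decomposes as a convex
sum over the blocks: `tr_M(Φⁿ(σ)) = Σ_α λ_α tr_M(Φⁿ(σ_α))` for every `n ≥ 1`, where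
`λ_α = tr(Pj_α σ Pj_α)` and `σ_α = Pj_α σ Pj_α / λ_α`. -/
theorem fcs_decomposes_into_ergodic_components
    {S D ι : Type*} [Fintype S] [Fintype D] [Fintype ι]
    [DecidableEq S] [DecidableEq D]
    (Φ : Matrix D D ℂ →ₗ[ℂ] Matrix (S × D) (S × D) ℂ)
    (hTP : ∀ X : Matrix D D ℂ, (Φ X).trace = X.trace)
    (hCP : ∀ (n : ℕ) (X : Matrix (Fin n × D) (Fin n × D) ℂ),
      X.PosSemidef → (idTensorGen (⇑Φ) X).PosSemidef)
    (Pj : ι → Matrix D D ℂ)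
    (hherm : ∀ α, (Pj α)ᴴ = Pj α)
    (hidem : ∀ α, Pj α * Pj α = Pj α)
    (horth : ∀ α β, α ≠ β → Pj α * Pj β = 0)
    (hone : ∑ α, Pj α = 1)
    (σ : Matrix D D ℂ) (hσ : σ.PosDef) (hσtr : σ.trace = 1)
    (hblock : σ = ∑ α, Pj α * σ * Pj α)
    (hinv : ∀ (α : ι) (X : Matrix D D ℂ),
      ((1 : Matrix S S ℂ) ⊗ₖ Pj α) * Φ (Pj α * X * Pj α) * ((1 : Matrix S S ℂ) ⊗ₖ Pj α) =
        Φ (Pj α * X * Pj α)) :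
    ∀ n : ℕ, 1 ≤ n →
      ptraceM (phiIter (⇑Φ) n σ) =
        ∑ α, ((Pj α * σ * Pj α).trace) •
          ptraceM (phiIter (⇑Φ) n (((Pj α * σ * Pj α).trace)⁻¹ • (Pj α * σ * Pj α))) :=
  fcs_decomposes_into_ergodic_components_general Φ Pj hherm σ hσ hblock
end

section
/- Let E be a quantum channel on M_d(ℂ) whose peripheral spectrum consists of the p-th roots of unity exp(2πik/p), each nondegenerate, with cyclic projections Π_0,…,Π_{p−1} summing to 1 such that the adjoint satisfies E†-action |Π_k⟩ ↦ |Π_{k−1}⟩ and with unique invariant state σ = Σ_k Π_k σ Π_k satisfying E(Π_k σ Π_k) = Π_{k+1} σ Π_{k+1} and tr(Π_k σ Π_k) = 1/p. Then the peripheral part Ẽ of E (Definition: Ẽ = spectral projection onto modulus-1 eigenvalues composed with E) is given explicitly by Ẽ(X) = p Σ_k tr(Π_k X Π_k) Π_{k+1} σ Π_{k+1} (indices mod p). -/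
open Matrix
open scoped ComplexOrder

/-- The root of unity `exp(2πi r / p)` indexed by `r : ZMod p`. -/
noncomputable def rootOfUnity' (p : ℕ) (r : ZMod p) : ℂ :=
  Complex.exp (2 * (Real.pi : ℂ) * Complex.I * (r.val : ℂ) / (p : ℂ))

/-- The tensor extension `id_T ⊗ M` of a map on `D × D` matrices. -/
def idTensorSq {T D : Type*} (M : Matrix D D ℂ → Matrix D D ℂ)
    (X : Matrix (T × D) (T × D) ℂ) : Matrix (T × D) (T × D) ℂ :=
  fun p q => M (fun x y => X (p.1, x) (q.1, y)) p.2 q.2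

/-! The blocks `Π_k σ Π_k` are permuted cyclically by `E`, so their discrete Fourier transforms
`w_r = Σ_k ω^{rk} Π_k σ Π_k` are eigenvectors of `E` with eigenvalue `ω^{-r}`. Nondegeneracy
of the peripheral spectrum makes `v_r` a multiple of `w_r`, and the pairing `tr(u_rᴴ w_r) = 1`
forces `v_r = w_r`. Substituting this into `Ẽ` leaves a double Fourier sum which, by the
orthogonality of characters, collapses onto the shift `k ↦ k + 1`. -/

lemma rootOfUnity'_eq_stdAddChar (p : ℕ) [NeZero p] (r : ZMod p) :
    rootOfUnity' p r = ZMod.stdAddChar r := by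
  rw [ZMod.stdAddChar_apply, ZMod.toCircle_apply, rootOfUnity']

section Fourier

variable {R S M : Type*} [CommRing R] [Fintype R] [CommRing S] [AddCommGroup M] [Module S M]

def fourierSum (ψ : AddChar R S) (B : R → M) (r : R) : M := ∑ k, ψ (r * k) • B k

lemma map_fourierSum {N : Type*} [AddCommGroup N] [Module S N] (f : M →ₗ[S] N)
    (ψ : AddChar R S) (B : R → M) (r : R) :
    f (fourierSum ψ B r) = fourierSum ψ (fun k => f (B k)) r := by
  simp only [fourierSum, map_sum, map_smul]

lemma fourierSum_shift (ψ : AddChar R S) (B : R → M) (r : R) :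
    fourierSum ψ (fun k => B (k + 1)) r = ψ (-r) • fourierSum ψ B r := by
  rw [fourierSum, fourierSum, Finset.smul_sum]
  refine Fintype.sum_equiv (Equiv.addRight 1) _ _ fun k => ?_
  rw [Equiv.coe_addRight, smul_smul, ← AddChar.map_add_eq_mul]
  congr 2
  ring

lemma sum_smul_fourierSum [DecidableEq R] [IsDomain S] {ψ : AddChar R S} (hψ : ψ.IsPrimitive)
    (B : R → M) (m : R) :
    ∑ r, ψ (-(r * m)) • fourierSum ψ B r = Fintype.card R • B m := by
  calc ∑ r, ψ (-(r * m)) • fourierSum ψ B r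
      = ∑ l, (∑ r, ψ (r * (l - m))) • B l := by
        simp only [fourierSum, Finset.smul_sum, smul_smul, Finset.sum_smul]
        rw [Finset.sum_comm]
        refine Finset.sum_congr rfl fun l _ => Finset.sum_congr rfl fun r _ => ?_
        rw [← AddChar.map_add_eq_mul]
        congr 2
        ring
    _ = Fintype.card R • B m := by
        simp only [AddChar.sum_mulShift _ hψ, sub_eq_zero, ite_smul, zero_smul,
          Finset.sum_ite_eq', Finset.mem_univ, if_true, Nat.cast_smul_eq_nsmul]

lemma sum_mul_fourierSum_neg_smul_fourierSum [DecidableEq R] [IsDomain S] {ψ : AddChar R S}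
    (hψ : ψ.IsPrimitive) (a : R → S) (B : R → M) :
    ∑ r, (ψ (-r) * fourierSum ψ a (-r)) • fourierSum ψ B r
      = Fintype.card R • ∑ k, a k • B (k + 1) := by
  calc ∑ r, (ψ (-r) * fourierSum ψ a (-r)) • fourierSum ψ B r
      = ∑ k, a k • ∑ r, ψ (-(r * (k + 1))) • fourierSum ψ B r := by
        simp only [Finset.smul_sum]
        rw [Finset.sum_comm]
        refine Finset.sum_congr rfl fun r _ => ?_
        rw [fourierSum, Finset.mul_sum, Finset.sum_smul]
        refine Finset.sum_congr rfl fun k _ => ?_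
        rw [smul_smul, smul_eq_mul, ← mul_assoc, ← AddChar.map_add_eq_mul, mul_comm _ (a k)]
        congr 3
        ring
    _ = Fintype.card R • ∑ k, a k • B (k + 1) := by
        simp only [sum_smul_fourierSum hψ, smul_comm (a _), Finset.smul_sum]

lemma fourierSum_neg_mul_fourierSum {A : Type*} [Ring A] [Algebra S A] [DecidableEq R]
    (ψ : AddChar R S) {P Q : R → A}
    (hPQ : ∀ k l, P k * Q l = if k = l then Q l else 0) (r : R) :
    fourierSum ψ P (-r) * fourierSum ψ Q r = ∑ k, Q k := by
  simp only [fourierSum, Finset.sum_mul, Finset.mul_sum, smul_mul_smul_comm, hPQ, smul_ite,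
    smul_zero, Finset.sum_ite_eq', Finset.mem_univ, if_true, ← AddChar.map_add_eq_mul]
  refine Finset.sum_congr rfl fun k _ => ?_
  rw [neg_mul, neg_add_cancel, AddChar.map_zero_eq_one, one_smul]

end Fourier

lemma OrthogonalIdempotents.mul_compress {A I : Type*} [Semiring A] [DecidableEq I] {e : I → A}
    (he : OrthogonalIdempotents e) (a : A) (i j : I) :
    e i * (e j * a * e j) = if i = j then e j * a * e j else 0 := by
  rw [← mul_assoc, ← mul_assoc, he.mul_eq]
  split_ifs with h
  · rw [h]
  · rw [zero_mul, zero_mul]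

section Matrix

variable {R D 𝕜 : Type*} [CommRing R] [Fintype R] [RCLike 𝕜]

lemma conjTranspose_fourierSum (ψ : AddChar R 𝕜) {P : R → Matrix D D 𝕜}
    (hP : ∀ k, (P k)ᴴ = P k) (r : R) :
    (fourierSum ψ P r)ᴴ = fourierSum ψ P (-r) := by
  simp only [fourierSum, conjTranspose_sum, conjTranspose_smul, hP, neg_mul,
    AddChar.map_neg_eq_conj, RCLike.star_def]

lemma trace_fourierSum_mul [Fintype D] (ψ : AddChar R 𝕜) (P : R → Matrix D D 𝕜)
    (X : Matrix D D 𝕜) (r : R) :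
    (fourierSum ψ P r * X).trace = fourierSum ψ (fun k => (P k * X).trace) r := by
  simp only [fourierSum, Finset.sum_mul, smul_mul_assoc, trace_sum, trace_smul]

lemma eq_of_eq_smul_of_trace_pairing_eq_one [Fintype D] {u v w : Matrix D D 𝕜} {z : 𝕜}
    (hw : w = z • v) (hvu : (vᴴ * u).trace = 1) (huw : (uᴴ * w).trace = 1) : w = v := by
  have huv : (uᴴ * v).trace = 1 := by
    rw [← conjTranspose_conjTranspose v, ← conjTranspose_mul, trace_conjTranspose, hvu,
      star_one]
  rw [hw, mul_smul_comm, trace_smul, huv, smul_eq_mul, mul_one] at huw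
  rw [hw, huw, one_smul]

end Matrix

theorem peripheral_part_of_cyclic_channel_general
    {D : Type*} [Fintype D] [DecidableEq D] (p : ℕ) [NeZero p]
    (E Et : Matrix D D ℂ →ₗ[ℂ] Matrix D D ℂ)
    (Pj : ZMod p → Matrix D D ℂ)
    (hherm : ∀ k, (Pj k)ᴴ = Pj k)
    (hidem : ∀ k, Pj k * Pj k = Pj k)
    (horth : ∀ k l, k ≠ l → Pj k * Pj l = 0)
    (σ : Matrix D D ℂ)
    (hcyc : ∀ k, E (Pj k * σ * Pj k) = Pj (k + 1) * σ * Pj (k + 1))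
    (htrk : ∀ k, (Pj k * σ * Pj k).trace = 1 / (p : ℂ))
    -- the biorthogonal peripheral eigenvectors `v_r` of `E`
    (v : ZMod p → Matrix D D ℂ)
    (hbio : ∀ r r',
      ((v r')ᴴ * (∑ k, rootOfUnity' p (r * k) • Pj k)).trace = if r = r' then 1 else 0)
    -- nondegeneracy of the peripheral spectrum
    (hperiph : ∀ (X : Matrix D D ℂ) (c : ℂ), X ≠ 0 → E X = c • X → ‖c‖ = 1 →
      ∃ (r : ZMod p) (z : ℂ), c = rootOfUnity' p (-r) ∧ X = z • v r)
    -- `Ẽ` is the peripheral part of `E`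
    (hEt : ∀ X : Matrix D D ℂ,
      Et X = ∑ r : ZMod p,
        (rootOfUnity' p (-r) *
          (((∑ k, rootOfUnity' p (r * k) • Pj k)ᴴ * X).trace)) • v r) :
    ∀ X : Matrix D D ℂ,
      Et X = (p : ℂ) • ∑ k : ZMod p,
        ((Pj k * X * Pj k).trace) • (Pj (k + 1) * σ * Pj (k + 1)) := by
  set ψ : AddChar (ZMod p) ℂ := ZMod.stdAddChar
  rw [show rootOfUnity' p = ψ from funext (rootOfUnity'_eq_stdAddChar p)] at hbio hperiph hEt
  simp only [← fourierSum.eq_1] at hbio hEt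
  set Q : ZMod p → Matrix D D ℂ := fun k => Pj k * σ * Pj k
  have hP : OrthogonalIdempotents Pj := ⟨hidem, horth⟩
  have hQ_eigen : ∀ r, E (fourierSum ψ Q r) = ψ (-r) • fourierSum ψ Q r := fun r => by
    rw [map_fourierSum, ← fourierSum_shift]
    exact congrArg (fourierSum ψ · r) (funext hcyc)
  have hQ_pairing : ∀ r, ((fourierSum ψ Pj r)ᴴ * fourierSum ψ Q r).trace = 1 := fun r => by
    rw [conjTranspose_fourierSum ψ hherm, fourierSum_neg_mul_fourierSum ψ (hP.mul_compress σ),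
      trace_sum]
    simp [htrk]
  have hv : ∀ r, v r = fourierSum ψ Q r := fun r => by
    have hne : fourierSum ψ Q r ≠ 0 := fun h => by simpa [h] using hQ_pairing r
    obtain ⟨r', z, hr', hz⟩ := hperiph _ _ hne (hQ_eigen r) (Circle.norm_coe _)
    obtain rfl : r = r' := neg_injective (ZMod.injective_stdAddChar hr')
    exact (eq_of_eq_smul_of_trace_pairing_eq_one hz (by simpa using hbio r r)
      (hQ_pairing r)).symm
  intro X
  rw [hEt]
  simp_rw [hv, conjTranspose_fourierSum ψ hherm, trace_fourierSum_mul]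
  rw [sum_mul_fourierSum_neg_smul_fourierSum (ZMod.isPrimitive_stdAddChar p), ZMod.card,
    ← Nat.cast_smul_eq_nsmul ℂ]
  refine congrArg _ (Finset.sum_congr rfl fun k _ => ?_)
  rw [trace_mul_cycle, hidem]

/-- Let `E` be a quantum channel on `M_d(ℂ)` whose peripheral spectrum consists of the
nondegenerate `p`-th roots of unity, with cyclic orthogonal projections `Π_k` summing to `1`
such that the adjoint maps `Π_k ↦ Π_{k−1}`, and with invariant state `σ = Σ_k Π_k σ Π_k`
satisfying `E(Π_k σ Π_k) = Π_{k+1} σ Π_{k+1}` and `tr(Π_k σ Π_k) = 1/p`.  Then the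
peripheral part `Ẽ = Σ_r e^{−2πir/p} |v_r⟩⟨u_r|` of `E` is given explicitly by
`Ẽ(X) = p Σ_k tr(Π_k X Π_k) Π_{k+1} σ Π_{k+1}` (indices mod `p`). -/
theorem peripheral_part_of_cyclic_channel
    {D : Type*} [Fintype D] [DecidableEq D] (p : ℕ) [NeZero p]
    (E Et : Matrix D D ℂ →ₗ[ℂ] Matrix D D ℂ)
    (hTP : ∀ X : Matrix D D ℂ, (E X).trace = X.trace)
    (hCP : ∀ (n : ℕ) (X : Matrix (Fin n × D) (Fin n × D) ℂ),
      X.PosSemidef → (idTensorSq (⇑E) X).PosSemidef)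
    (Pj : ZMod p → Matrix D D ℂ)
    (hherm : ∀ k, (Pj k)ᴴ = Pj k)
    (hidem : ∀ k, Pj k * Pj k = Pj k)
    (horth : ∀ k l, k ≠ l → Pj k * Pj l = 0)
    (hone : ∑ k, Pj k = 1)
    (σ : Matrix D D ℂ) (hσ : σ.PosSemidef) (hσtr : σ.trace = 1)
    (hσfix : E σ = σ)
    (hblock : σ = ∑ k, Pj k * σ * Pj k)
    (hcyc : ∀ k, E (Pj k * σ * Pj k) = Pj (k + 1) * σ * Pj (k + 1))
    (htrk : ∀ k, (Pj k * σ * Pj k).trace = 1 / (p : ℂ))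
    (hadj : ∀ (k : ZMod p) (X : Matrix D D ℂ),
      (Pj k * E X).trace = (Pj (k - 1) * X).trace)
    (herg : ∀ X : Matrix D D ℂ, E X = X → ∃ z : ℂ, X = z • σ)
    -- the biorthogonal peripheral eigenvectors `v_r` of `E`
    (v : ZMod p → Matrix D D ℂ)
    (heigv : ∀ r, E (v r) = rootOfUnity' p (-r) • v r)
    (hbio : ∀ r r',
      ((v r')ᴴ * (∑ k, rootOfUnity' p (r * k) • Pj k)).trace = if r = r' then 1 else 0)
    -- nondegeneracy of the peripheral spectrum
    (hperiph : ∀ (X : Matrix D D ℂ) (c : ℂ), X ≠ 0 → E X = c • X → ‖c‖ = 1 →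
      ∃ (r : ZMod p) (z : ℂ), c = rootOfUnity' p (-r) ∧ X = z • v r)
    -- `Ẽ` is the peripheral part of `E`
    (hEt : ∀ X : Matrix D D ℂ,
      Et X = ∑ r : ZMod p,
        (rootOfUnity' p (-r) *
          (((∑ k, rootOfUnity' p (r * k) • Pj k)ᴴ * X).trace)) • v r) :
    ∀ X : Matrix D D ℂ,
      Et X = (p : ℂ) • ∑ k : ZMod p,
        ((Pj k * X * Pj k).trace) • (Pj (k + 1) * σ * Pj (k + 1)) :=
  peripheral_part_of_cyclic_channel_general p E Et Pj hherm hidem horth σ hcyc htrk v hbio hperiph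
    hEt
end

section
/- Let Φ be a quantum channel of the form Φ(X) = (1−η) tr(X) χ + η N(X) with 0 < η < 1, χ a density operator with tr(χ²) > 0, and N a quantum channel. Then Φ cannot be of the form X ↦ V X V† for an isometry V. More precisely, for orthogonal unit vectors ψ ⊥ φ, tr(Φ(|ψ⟩⟨ψ|)Φ(|φ⟩⟨φ|)) ≥ (1−η)² tr(χ²) > 0, whereas tr(V|ψ⟩⟨ψ|V† · V|φ⟩⟨φ|V†) = |⟨ψ|φ⟩|² = 0. -/
/-!
The forgetful part `(1 - η) tr(X) χ` contributes the same positive operator `(1 - η) χ` to the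
image of every pure state, so the images of two orthogonal pure states overlap: expanding
`tr(Φ(|ψ⟩⟨ψ|) Φ(|φ⟩⟨φ|))`, every term is the trace of a product of positive semidefinite
matrices, hence nonnegative, and the `χ χ` term alone gives `(1 - η)² tr(χ²) > 0`. Conjugation
by an isometry instead preserves orthogonality of pure states, so the same overlap vanishes.
-/

open Matrix
open scoped ComplexOrder

namespace Matrix

variable {n : Type*} [Fintype n]

section RCLike

variable {𝕜 : Type*} [RCLike 𝕜]

theorem PosSemidef.trace_mul_nonneg {A B : Matrix n n 𝕜} (hA : A.PosSemidef)
    (hB : B.PosSemidef) : 0 ≤ (A * B).trace := by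
  classical
  open scoped MatrixOrder in
  obtain ⟨C, rfl⟩ := CStarAlgebra.nonneg_iff_eq_star_mul_self.mp hA.nonneg
  rw [star_eq_conjTranspose, Matrix.mul_assoc, trace_mul_comm]
  exact (hB.mul_mul_conjTranspose_same C).trace_nonneg

theorem PosSemidef.sq_mul_trace_mul_self_le {χ A B : Matrix n n 𝕜} (hχ : χ.PosSemidef)
    (hA : A.PosSemidef) (hB : B.PosSemidef) {a b : 𝕜} (ha : 0 ≤ a) (hb : 0 ≤ b) :
    a ^ 2 * (χ * χ).trace ≤ ((a • χ + b • A) * (a • χ + b • B)).trace := by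
  have hexpand : ((a • χ + b • A) * (a • χ + b • B)).trace =
      a ^ 2 * (χ * χ).trace + a * b * (χ * B).trace + b * a * (A * χ).trace
        + b ^ 2 * (A * B).trace := by
    simp only [Matrix.add_mul, Matrix.mul_add, Matrix.smul_mul, Matrix.mul_smul,
      trace_add, trace_smul, smul_eq_mul]
    ring
  rw [hexpand]
  have hχB := mul_nonneg (mul_nonneg ha hb) (hχ.trace_mul_nonneg hB)
  have hAχ := mul_nonneg (mul_nonneg hb ha) (hA.trace_mul_nonneg hχ)
  have hAB := mul_nonneg (pow_nonneg hb 2) (hA.trace_mul_nonneg hB)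
  linear_combination hχB + hAχ + hAB

end RCLike

theorem conj_mul_conj_of_conjTranspose_mul_self_eq_one {m R : Type*} [Fintype m]
    [DecidableEq m] [Semiring R] [StarRing R] {V : Matrix n m R} (hV : Vᴴ * V = 1)
    (A B : Matrix m m R) :
    V * A * Vᴴ * (V * B * Vᴴ) = V * (A * B) * Vᴴ := by
  calc V * A * Vᴴ * (V * B * Vᴴ) = V * A * (Vᴴ * V) * B * Vᴴ := by simp only [Matrix.mul_assoc]
    _ = V * (A * B) * Vᴴ := by rw [hV, Matrix.mul_one, Matrix.mul_assoc V A B]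

theorem vecMulVec_mul_vecMulVec_eq_zero {R : Type*} [Semiring R]
    {u v w x : n → R} (h : v ⬝ᵥ w = 0) : vecMulVec u v * vecMulVec w x = 0 := by
  rw [vecMulVec_mul_vecMulVec, h, zero_smul]
  ext i j
  simp [vecMulVec_apply]

end Matrix

theorem forgetful_channel_not_isometric_conjugation_general
    {s m : Type*} [Fintype s] [Fintype m] [DecidableEq m]
    (η : ℝ) (hη0 : 0 < η) (hη1 : η < 1)
    (χ : Matrix (s × m) (s × m) ℂ) (hχ : χ.PosSemidef)
    (hχ2 : 0 < ((χ * χ).trace).re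
    )
    (N : Matrix m m ℂ →ₗ[ℂ] Matrix (s × m) (s × m) ℂ)
    (hNpos : ∀ X : Matrix m m ℂ, X.PosSemidef → (N X).PosSemidef)
    (Φ : Matrix m m ℂ →ₗ[ℂ] Matrix (s × m) (s × m) ℂ)
    (hΦ : ∀ X : Matrix m m ℂ,
      Φ X = ((1 - η : ℝ) : ℂ) • (X.trace • χ) + (η : ℂ) • N X)
    (ψ φ : m → ℂ)
    (hψ : ∑ i, (starRingEnd ℂ) (ψ i) * ψ i = 1)
    (hφ : ∑ i, (starRingEnd ℂ) (φ i) * φ i = 1)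
    (horth : ∑ i, (starRingEnd ℂ) (ψ i) * φ i = 0) :
    (((1 - η) ^ 2 * ((χ * χ).trace).re ≤
        ((Φ (Matrix.vecMulVec ψ (star ψ)) * Φ (Matrix.vecMulVec φ (star φ))).trace).re) ∧
      (∀ V : Matrix (s × m) m ℂ, Vᴴ * V = 1 →
        (V * Matrix.vecMulVec ψ (star ψ) * Vᴴ * (V * Matrix.vecMulVec φ (star φ) * Vᴴ)).trace
          = 0)) ∧
      ¬ ∃ V : Matrix (s × m) m ℂ, Vᴴ * V = 1 ∧ ∀ X : Matrix m m ℂ, Φ X = V * X * Vᴴ := by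
  have hΦ_pure : ∀ v : m → ℂ, ∑ i, (starRingEnd ℂ) (v i) * v i = 1 →
      Φ (vecMulVec v (star v)) = ((1 - η : ℝ) : ℂ) • χ + (η : ℂ) • N (vecMulVec v (star v)) := by
    intro v hv
    rw [hΦ, trace_vecMulVec, dotProduct_comm]
    simp only [dotProduct, Pi.star_apply, RCLike.star_def, hv, one_smul]
  have hoverlap : (1 - η) ^ 2 * ((χ * χ).trace).re ≤
      ((Φ (vecMulVec ψ (star ψ)) * Φ (vecMulVec φ (star φ))).trace).re := by
    rw [hΦ_pure ψ hψ, hΦ_pure φ hφ]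
    have h := hχ.sq_mul_trace_mul_self_le (hNpos _ (posSemidef_vecMulVec_self_star ψ))
      (hNpos _ (posSemidef_vecMulVec_self_star φ))
      (Complex.zero_le_real.mpr (sub_nonneg.mpr hη1.le)) (Complex.zero_le_real.mpr hη0.le)
    rw [← Complex.ofReal_pow, Complex.le_def, Complex.re_ofReal_mul] at h
    exact h.1
  have hisometry : ∀ V : Matrix (s × m) m ℂ, Vᴴ * V = 1 →
      (V * vecMulVec ψ (star ψ) * Vᴴ * (V * vecMulVec φ (star φ) * Vᴴ)).trace = 0 := by
    intro V hV
    rw [conj_mul_conj_of_conjTranspose_mul_self_eq_one hV,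
      vecMulVec_mul_vecMulVec_eq_zero (v := star ψ) horth, Matrix.mul_zero, Matrix.zero_mul,
      trace_zero]
  refine ⟨⟨hoverlap, hisometry⟩, ?_⟩
  rintro ⟨V, hV, hΦV⟩
  have hzero := hisometry V hV
  rw [← hΦV, ← hΦV] at hzero
  rw [hzero, Complex.zero_re] at hoverlap
  linarith [mul_pos (pow_pos (sub_pos.mpr hη1) 2) hχ2]

/-- A quantum channel with a forgetful component, `Φ(X) = (1−η) tr(X) χ + η N(X)`
with `0 < η < 1`, `χ` a density operator with `tr(χ²) > 0` and `N` a channel, cannot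
be a conjugation `X ↦ V X Vᴴ` by an isometry: for orthogonal unit vectors `ψ ⊥ φ`,
`tr(Φ(|ψ⟩⟨ψ|)Φ(|φ⟩⟨φ|)) ≥ (1−η)² tr(χ²) > 0`, whereas
`tr(V|ψ⟩⟨ψ|Vᴴ · V|φ⟩⟨φ|Vᴴ) = |⟨ψ|φ⟩|² = 0`. -/
theorem forgetful_channel_not_isometric_conjugation
    {s m : Type*} [Fintype s] [Fintype m] [DecidableEq m]
    (η : ℝ) (hη0 : 0 < η) (hη1 : η < 1)
    (χ : Matrix (s × m) (s × m) ℂ) (hχ : χ.PosSemidef) (hχtr : χ.trace = 1)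
    (hχ2 : 0 < ((χ * χ).trace).re
    )
    (N : Matrix m m ℂ →ₗ[ℂ] Matrix (s × m) (s × m) ℂ)
    (hNpos : ∀ X : Matrix m m ℂ, X.PosSemidef → (N X).PosSemidef)
    (hNtr : ∀ X : Matrix m m ℂ, (N X).trace = X.trace)
    (Φ : Matrix m m ℂ →ₗ[ℂ] Matrix (s × m) (s × m) ℂ)
    (hΦ : ∀ X : Matrix m m ℂ,
      Φ X = ((1 - η : ℝ) : ℂ) • (X.trace • χ) + (η : ℂ) • N X)
    (ψ φ : m → ℂ)
    (hψ : ∑ i, (starRingEnd ℂ) (ψ i) * ψ i = 1)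
    (hφ : ∑ i, (starRingEnd ℂ) (φ i) * φ i = 1)
    (horth : ∑ i, (starRingEnd ℂ) (ψ i) * φ i = 0) :
    (((1 - η) ^ 2 * ((χ * χ).trace).re ≤
        ((Φ (Matrix.vecMulVec ψ (star ψ)) * Φ (Matrix.vecMulVec φ (star φ))).trace).re) ∧
      (∀ V : Matrix (s × m) m ℂ, Vᴴ * V = 1 →
        (V * Matrix.vecMulVec ψ (star ψ) * Vᴴ * (V * Matrix.vecMulVec φ (star φ) * Vᴴ)).trace
          = 0)) ∧
      ¬ ∃ V : Matrix (s × m) m ℂ, Vᴴ * V = 1 ∧ ∀ X : Matrix m m ℂ, Φ X = V * X * Vᴴ :=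
  forgetful_channel_not_isometric_conjugation_general η hη0 hη1 χ hχ hχ2 N hNpos Φ hΦ ψ φ hψ hφ
    horth
end
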